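/- arXiv:2002.08808 — 4 statements merged into one kernel-verified Lean document; each statement's English description precedes it below -/
import Mathlib

section
/- Let n ≥ 1 be an integer, ε, c ∈ ℝ, set C := 2(n+1)ε, and let I ⊆ ℝ be an open interval. Suppose ρ : I → ℝ is twice differentiable with ρ(t) > 0 and ρ'(t) > 0 on I and satisfies 2(ρ(t)·ρ''(t) + n·ρ'(t)²) + C·ρ(t)² = 2c for all t ∈ I. Define z(t) := ρ'(t)² + ε·ρ(t)². Then z'(t) = 2c·ρ'(t)/ρ(t) − 2n·(ρ'(t)/ρ(t))·z(t) on I, and consequently there exists a constant D ∈ ℝ such that ρ'(t)² + ε·ρ(t)² = c/n + D·ρ(t)^{−2n} for all t ∈ I. -/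
/-!
Differentiating `z = ρ'² + ε ρ²` and eliminating `ρ''` with the ODE gives the linear equation
`z' = 2n (ρ'/ρ) (c/n - z)`, for which `ρ^{2n}` is an integrating factor: `ρ^{2n} (z - c/n)` has
zero derivative, hence is a constant `D` on the interval.
-/

theorem hasDerivAt_sq_add_mul_sq_of_ode {n ε c ρ'' t : ℝ} {ρ ρ' : ℝ → ℝ}
    (hρ : HasDerivAt ρ (ρ' t) t) (hρ' : HasDerivAt ρ' ρ'' t) (hρt : ρ t ≠ 0)
    (hODE : 2 * (ρ t * ρ'' + n * ρ' t ^ 2) + 2 * (n + 1) * ε * ρ t ^ 2 = 2 * c) :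
    HasDerivAt (fun t => ρ' t ^ 2 + ε * ρ t ^ 2)
      (2 * c * (ρ' t / ρ t) - 2 * n * (ρ' t / ρ t) * (ρ' t ^ 2 + ε * ρ t ^ 2)) t := by
  refine ((hρ'.pow 2).add ((hρ.pow 2).const_mul ε)).congr_deriv ?_
  field_simp
  linear_combination ρ' t * hODE

theorem hasDerivAt_pow_mul_sub_eq_zero {k : ℕ} {a ρ' t : ℝ} {ρ z : ℝ → ℝ}
    (hρ : HasDerivAt ρ ρ' t) (hz : HasDerivAt z (k * (ρ' / ρ t) * (a - z t)) t)
    (hρt : ρ t ≠ 0) :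
    HasDerivAt (fun t => ρ t ^ k * (z t - a)) 0 t := by
  refine ((hρ.pow k).mul (hz.sub_const a)).congr_deriv ?_
  rcases k with _ | k
  · simp
  · simp only [Pi.pow_apply, Nat.add_sub_cancel, Nat.cast_add, Nat.cast_one, pow_succ]
    field_simp
    ring

theorem stmt_1_general (n : ℕ) (hn : 1 ≤ n) (ε c : ℝ) (C : ℝ)
    (hC : C = 2 * ((n : ℝ) + 1) * ε)
    (I : Set ℝ) (hIopen : IsOpen I) (hIconv : Convex ℝ I)
    (ρ ρ' ρ'' : ℝ → ℝ)
    (hρ : ∀ t ∈ I, HasDerivAt ρ (ρ' t) t)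
    (hρ' : ∀ t ∈ I, HasDerivAt ρ' (ρ'' t) t)
    (hpos : ∀ t ∈ I, 0 < ρ t)
    (hODE : ∀ t ∈ I, 2 * (ρ t * ρ'' t + (n : ℝ) * (ρ' t) ^ 2) + C * (ρ t) ^ 2 = 2 * c) :
    (∀ t ∈ I, HasDerivAt (fun t => (ρ' t) ^ 2 + ε * (ρ t) ^ 2)
      (2 * c * (ρ' t / ρ t) - 2 * (n : ℝ) * (ρ' t / ρ t) * ((ρ' t) ^ 2 + ε * (ρ t) ^ 2)) t) ∧
    ∃ D : ℝ, ∀ t ∈ I,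
      (ρ' t) ^ 2 + ε * (ρ t) ^ 2 = c / (n : ℝ) + D * (ρ t) ^ (-(2 * n : ℤ)) := by
  subst hC
  have hz (t) (ht : t ∈ I) := hasDerivAt_sq_add_mul_sq_of_ode (hρ t ht) (hρ' t ht)
    (hpos t ht).ne' (hODE t ht)
  refine ⟨hz, ?_⟩
  have hn0 : (n : ℝ) ≠ 0 := Nat.cast_ne_zero.mpr (by omega)
  have hw (t) (ht : t ∈ I) : HasDerivAt
      (fun t => ρ t ^ (2 * n) * ((ρ' t) ^ 2 + ε * (ρ t) ^ 2 - c / n)) 0 t := by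
    refine hasDerivAt_pow_mul_sub_eq_zero (hρ t ht) ?_ (hpos t ht).ne'
    refine (hz t ht).congr_deriv ?_
    push_cast
    field_simp
  obtain ⟨D, hD⟩ := hIopen.exists_is_const_of_deriv_eq_zero hIconv.isPreconnected
    (fun t ht => (hw t ht).differentiableAt.differentiableWithinAt)
    (fun t ht => (hw t ht).deriv)
  refine ⟨D, fun t ht => ?_⟩
  have hpow_neg : ρ t ^ (-(2 * n : ℤ)) = (ρ t ^ (2 * n))⁻¹ := by
    rw [zpow_neg]
    norm_cast
  rw [← hD t ht, hpow_neg]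
  field_simp [(hpos t ht).ne']
  ring

/-- First-order reduction of the Kähler–Einstein condition: with
`z = ρ'² + ε ρ²`, the second-order ODE `2(ρ ρ'' + n ρ'²) + C ρ² = 2c`
(where `C = 2(n+1)ε`) yields `z' = 2c ρ'/ρ - 2n (ρ'/ρ) z`, hence
`ρ'² + ε ρ² = c/n + D ρ^{-2n}` for some constant `D`. -/
theorem stmt_1 (n : ℕ) (hn : 1 ≤ n) (ε c : ℝ) (C : ℝ)
    (hC : C = 2 * ((n : ℝ) + 1) * ε)
    (I : Set ℝ) (hIopen : IsOpen I) (hIconv : Convex ℝ I)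
    (ρ ρ' ρ'' : ℝ → ℝ)
    (hρ : ∀ t ∈ I, HasDerivAt ρ (ρ' t) t)
    (hρ' : ∀ t ∈ I, HasDerivAt ρ' (ρ'' t) t)
    (hpos : ∀ t ∈ I, 0 < ρ t)
    (hpos' : ∀ t ∈ I, 0 < ρ' t)
    (hODE : ∀ t ∈ I, 2 * (ρ t * ρ'' t + (n : ℝ) * (ρ' t) ^ 2) + C * (ρ t) ^ 2 = 2 * c) :
    (∀ t ∈ I, HasDerivAt (fun t => (ρ' t) ^ 2 + ε * (ρ t) ^ 2)
      (2 * c * (ρ' t / ρ t) - 2 * (n : ℝ) * (ρ' t / ρ t) * ((ρ' t) ^ 2 + ε * (ρ t) ^ 2)) t) ∧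
    ∃ D : ℝ, ∀ t ∈ I,
      (ρ' t) ^ 2 + ε * (ρ t) ^ 2 = c / (n : ℝ) + D * (ρ t) ^ (-(2 * n : ℤ)) :=
  stmt_1_general n hn ε c C hC I hIopen hIconv ρ ρ' ρ'' hρ hρ' hpos hODE
end

section
/- Let n ≥ 1 be an integer, d > 0, and let c ∈ ℝ satisfy c ≤ (n+1)·(n·d)^{1/(n+1)}. Then there is no nonempty open interval I ⊆ ℝ and differentiable function ρ : I → ℝ with ρ(t) > 0, ρ'(t) > 0, and ρ'(t)² = −ρ(t)² − d·ρ(t)^{−2n} + c/n for all t ∈ I. -/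
/-- AM-GM via Bernoulli: for positive `m, y`, `(n+1) m yⁿ ≤ n yⁿ⁺¹ + mⁿ⁺¹`. -/
lemma key_amgm (n : ℕ) (m y : ℝ) (hm : 0 < m) (hy : 0 < y) :
    ((n : ℝ) + 1) * m * y ^ n ≤ (n : ℝ) * y ^ (n + 1) + m ^ (n + 1) := by
  have ha : (-2 : ℝ) ≤ m / y - 1 := by
    have : 0 < m / y := div_pos hm hy
    linarith
  have h := one_add_mul_le_pow ha (n + 1)
  have h2 := mul_le_mul_of_nonneg_right h (pow_nonneg hy.le (n + 1))
  have e2 : (1 + (m / y - 1)) ^ (n + 1) * y ^ (n + 1) = m ^ (n + 1) := by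
    rw [show (1 : ℝ) + (m / y - 1) = m / y by ring, div_pow, div_mul_cancel₀]
    exact pow_ne_zero _ hy.ne'
  have e1 : (1 + ((n : ℝ) + 1) * (m / y - 1)) * y ^ (n + 1)
      = ((n : ℝ) + 1) * m * y ^ n - (n : ℝ) * y ^ (n + 1) := by
    have hyne : y ≠ 0 := hy.ne'
    field_simp
    ring
  push_cast at h2
  rw [e1, e2] at h2
  linarith

/-- For `d > 0` and `c ≤ (n+1)(n d)^{1/(n+1)}`, there is no positive increasing
solution of `ρ'² = -ρ² - d ρ^{-2n} + c/n` on any nonempty open interval. -/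
theorem stmt_12 (n : ℕ) (hn : 1 ≤ n) (d c : ℝ) (hd : 0 < d)
    (hc : c ≤ ((n : ℝ) + 1) * ((n : ℝ) * d) ^ ((1 : ℝ) / ((n : ℝ) + 1))) :
    ¬ ∃ (I : Set ℝ) (ρ ρ' : ℝ → ℝ), IsOpen I ∧ Convex ℝ I ∧ I.Nonempty ∧
      (∀ t ∈ I, HasDerivAt ρ (ρ' t) t) ∧
      (∀ t ∈ I, 0 < ρ t ∧ 0 < ρ' t ∧
        (ρ' t) ^ 2 = -(ρ t) ^ 2 - d * (ρ t) ^ (-(2 * n : ℤ)) + c / (n : ℝ)) := by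
  rintro ⟨I, ρ, ρ', _, _, ⟨t, ht⟩, _, h⟩
  obtain ⟨hx, hx', heq⟩ := h t ht
  set x := ρ t with hxdef
  have hN' : (1 : ℝ) ≤ (n : ℝ) := by exact_mod_cast hn
  have hN : (0 : ℝ) < (n : ℝ) := by linarith
  have hN1 : (0 : ℝ) < (n : ℝ) + 1 := by linarith
  set m : ℝ := ((n : ℝ) * d) ^ ((1 : ℝ) / ((n : ℝ) + 1)) with hmdef
  have hm : 0 < m := Real.rpow_pos_of_pos (mul_pos hN hd) _
  have hmn : m ^ (n + 1) = (n : ℝ) * d := by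
    rw [hmdef, ← Real.rpow_natCast (((n : ℝ) * d) ^ ((1 : ℝ) / ((n : ℝ) + 1))) (n + 1),
      ← Real.rpow_mul (mul_pos hN hd).le]
    push_cast
    rw [one_div, inv_mul_cancel₀ hN1.ne', Real.rpow_one]
  -- rewrite the zpow
  have hz : x ^ (-(2 * n : ℤ)) = (x ^ (2 * n))⁻¹ := by
    rw [zpow_neg]
    norm_cast
  have key := key_amgm n m (x ^ 2) hm (pow_pos hx 2)
  rw [hmn, ← pow_mul, ← pow_mul] at key
  -- key : (n+1) * m * x^(2n) ≤ n * x^(2(n+1)) + n*d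
  have hx2n : (0 : ℝ) < x ^ (2 * n) := pow_pos hx _
  have hzpos : (0 : ℝ) < (x ^ (2 * n))⁻¹ := inv_pos.mpr hx2n
  have hmul : x ^ (2 * n) * (x ^ (2 * n))⁻¹ = 1 := mul_inv_cancel₀ hx2n.ne'
  have hcN : (n : ℝ) * (c / n) = c := mul_div_cancel₀ c hN.ne'
  have hpow : x ^ (2 * (n + 1)) = x ^ (2 * n) * x ^ 2 := by ring
  rw [hpow] at key
  -- show RHS ≤ 0
  have hrhs : -(x) ^ 2 - d * x ^ (-(2 * n : ℤ)) + c / (n : ℝ) ≤ 0 := by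
    rw [hz]
    have h1 : c * x ^ (2 * n) ≤ ((n : ℝ) + 1) * m * x ^ (2 * n) :=
      mul_le_mul_of_nonneg_right hc hx2n.le
    have h3 : c * x ^ (2 * n) ≤ (n : ℝ) * x ^ (2 * n) * x ^ 2 + (n : ℝ) * d := by
      nlinarith [key, h1]
    have h5 := mul_le_mul_of_nonneg_right h3 hzpos.le
    rw [mul_assoc, hmul, mul_one] at h5
    have e : ((n : ℝ) * x ^ (2 * n) * x ^ 2 + (n : ℝ) * d) * (x ^ (2 * n))⁻¹
        = (n : ℝ) * x ^ 2 * (x ^ (2 * n) * (x ^ (2 * n))⁻¹) + (n : ℝ) * d * (x ^ (2 * n))⁻¹ := by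
      ring
    rw [e, hmul, mul_one] at h5
    -- h5 : c ≤ n * x^2 + n * d * z
    have h6 : c / (n : ℝ) ≤ x ^ 2 + d * (x ^ (2 * n))⁻¹ := by
      rw [div_le_iff₀ hN]
      nlinarith [h5]
    linarith
  have : (0 : ℝ) < (ρ' t) ^ 2 := pow_pos hx' 2
  linarith [heq ▸ this]
end

section
/- Let n ≥ 1 be an integer, D > 0, set c := −(n+1)·(n·D)^{1/(n+1)} and ρ₀ := (n·D)^{1/(2n+2)}, and define h(x) := x² + D·x^{−2n} + c/n on (0,∞). Then for every a > ρ₀ the function x ↦ 1/√(h(x)) is not integrable on (ρ₀, a), i.e. the improper integral ∫_{ρ₀}^{a} h(x)^{−1/2} dx diverges. -/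
/-!
For `x > ρ₀` the derivative `h' x = 2 (x^(2n+2) - ρ₀^(2n+2)) / x^(2n+1)` lies in
`(0, (4n+4)(x - ρ₀)]`, and `h ρ₀ = 0`; by the mean value theorem
`0 < h x ≤ (4n+4)(x - ρ₀)²`. Hence `1 / √(h x) ≥ 1 / (√(4n+4) (x - ρ₀))`, and `(x - ρ₀)⁻¹` is not
integrable at `ρ₀`.
-/

open MeasureTheory Set

/-- `h` parametrized by its double zero `ρ`: `D = ρ^(2n+2) / n` and `c = -(n+1) ρ²`. -/
noncomputable def potential (n : ℕ) (ρ x : ℝ) : ℝ :=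
  x ^ 2 + ρ ^ (2 * n + 2) / n * x ^ (-(2 * n : ℤ)) - (n + 1) / n * ρ ^ 2

theorem not_integrableOn_one_div_sqrt_of_le_mul_sq {g : ℝ → ℝ} {ρ a K : ℝ} (hρa : ρ < a)
    (hK : 0 < K) (hg : ∀ x ∈ Ioo ρ a, 0 < g x ∧ g x ≤ K * (x - ρ) ^ 2) :
    ¬ IntegrableOn (fun x => 1 / √(g x)) (Ioo ρ a) := by
  intro hint
  have hinv : IntegrableOn (fun x => (x - ρ)⁻¹) (Ioo ρ a) := by
    refine Integrable.mono' (hint.const_mul √K)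
      ((measurable_id.sub_const ρ).inv).aestronglyMeasurable ?_
    rw [ae_restrict_iff' measurableSet_Ioo]
    filter_upwards with x hx
    obtain ⟨hgpos, hgle⟩ := hg x hx
    have hxρ : 0 < x - ρ := sub_pos.mpr hx.1
    have hsqrt : √(g x) ≤ √K * (x - ρ) := by
      calc √(g x) ≤ √(K * (x - ρ) ^ 2) := Real.sqrt_le_sqrt hgle
        _ = √K * (x - ρ) := by rw [Real.sqrt_mul hK.le, Real.sqrt_sq hxρ.le]
    rw [Real.norm_of_nonneg (inv_pos.mpr hxρ).le, mul_one_div,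
      inv_le_iff_one_le_mul₀ hxρ, div_mul_eq_mul_div, le_div_iff₀ (Real.sqrt_pos.mpr hgpos)]
    linarith
  have hii : IntervalIntegrable (fun x => (x - ρ)⁻¹) volume ρ a := by
    rwa [intervalIntegrable_iff_integrableOn_Ioc_of_le hρa.le,
      integrableOn_Ioc_iff_integrableOn_Ioo]
  rw [intervalIntegrable_sub_inv_iff] at hii
  exact hii.elim hρa.ne fun h => h left_mem_uIcc

theorem pos_and_le_mul_sq_of_hasDerivAt {f f' : ℝ → ℝ} {ρ x K : ℝ} (hρx : ρ < x)
    (hf : ContinuousOn f (Icc ρ x)) (hf' : ∀ y ∈ Ioo ρ x, HasDerivAt f (f' y) y)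
    (hfρ : f ρ = 0) (hK : 0 ≤ K) (hf'_bound : ∀ y ∈ Ioo ρ x, 0 < f' y ∧ f' y ≤ K * (y - ρ)) :
    0 < f x ∧ f x ≤ K * (x - ρ) ^ 2 := by
  obtain ⟨ξ, hξ, hslope⟩ := exists_hasDerivAt_eq_slope f f' hρx hf hf'
  have hxρ : 0 < x - ρ := sub_pos.mpr hρx
  have hfx : f x = f' ξ * (x - ρ) := by
    rw [hslope, hfρ, sub_zero, div_mul_cancel₀ _ hxρ.ne']
  obtain ⟨hpos, hle⟩ := hf'_bound ξ hξ
  refine ⟨hfx ▸ mul_pos hpos hxρ, ?_⟩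
  calc f x = f' ξ * (x - ρ) := hfx
    _ ≤ K * (x - ρ) * (x - ρ) := by
        gcongr
        exact hle.trans (by gcongr; exact hξ.2.le)
    _ = K * (x - ρ) ^ 2 := by ring

theorem pow_succ_sub_pow_succ_div_pow_le {ρ y : ℝ} (hρ : 0 ≤ ρ) (hρy : ρ ≤ y) (hy : 0 < y)
    (m : ℕ) : (y ^ (m + 1) - ρ ^ (m + 1)) / y ^ m ≤ (m + 1) * (y - ρ) := by
  have h := abs_pow_sub_pow_le y ρ (m + 1)
  rw [abs_of_nonneg (sub_nonneg.mpr (pow_le_pow_left₀ hρ hρy _)),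
    abs_of_nonneg (sub_nonneg.mpr hρy), abs_of_nonneg hρ, abs_of_pos hy,
    max_eq_left hρy, Nat.add_sub_cancel] at h
  rw [div_le_iff₀ (pow_pos hy m)]
  push_cast at h
  linarith

section potential

variable {n : ℕ} {ρ : ℝ}

theorem potential_self (hn : n ≠ 0) (hρ : ρ ≠ 0) : potential n ρ ρ = 0 := by
  have hn' : (n : ℝ) ≠ 0 := Nat.cast_ne_zero.mpr hn
  rw [potential, zpow_neg, show (2 * n : ℤ) = ((2 * n : ℕ) : ℤ) by push_cast; ring,
    zpow_natCast]
  field_simp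
  ring

theorem hasDerivAt_potential (hn : n ≠ 0) {x : ℝ} (hx : x ≠ 0) :
    HasDerivAt (potential n ρ)
      (2 * (x ^ (2 * n + 2) - ρ ^ (2 * n + 2)) / x ^ (2 * n + 1)) x := by
  have hn' : (n : ℝ) ≠ 0 := Nat.cast_ne_zero.mpr hn
  have h := (((hasDerivAt_pow 2 x).add
    ((hasDerivAt_zpow (-(2 * n : ℤ)) x (Or.inl hx)).const_mul (ρ ^ (2 * n + 2) / n))).sub_const
    ((n + 1) / n * ρ ^ 2))
  refine h.congr_deriv ?_
  rw [show -(2 * n : ℤ) - 1 = -((2 * n + 1 : ℕ) : ℤ) by push_cast; ring, zpow_neg, zpow_natCast]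
  field_simp
  push_cast
  ring

theorem potential_pos_and_le_mul_sq (hn : n ≠ 0) (hρ : 0 < ρ) {x : ℝ} (hρx : ρ < x) :
    0 < potential n ρ x ∧ potential n ρ x ≤ (4 * n + 4) * (x - ρ) ^ 2 := by
  refine pos_and_le_mul_sq_of_hasDerivAt hρx
    (fun y hy => (hasDerivAt_potential hn (hρ.trans_le hy.1).ne').continuousAt.continuousWithinAt)
    (fun y hy => hasDerivAt_potential hn (hρ.trans hy.1).ne') (potential_self hn hρ.ne')
    (by positivity) fun y hy => ⟨?_, ?_⟩
  · have hy0 : 0 < y := hρ.trans hy.1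
    have := pow_lt_pow_left₀ hy.1 hρ.le (n := 2 * n + 2) (by omega)
    have : 0 < y ^ (2 * n + 2) - ρ ^ (2 * n + 2) := by linarith
    positivity
  · have h := pow_succ_sub_pow_succ_div_pow_le hρ.le hy.1.le (hρ.trans hy.1) (2 * n + 1)
    rw [mul_div_assoc]
    push_cast at h
    linarith

end potential

/-- For `D > 0`, `c = -(n+1)(n D)^{1/(n+1)}` and `ρ₀ = (n D)^{1/(2n+2)}`
(so that `h(x) = x² + D x^{-2n} + c/n` has a double zero at `ρ₀`), the function
`1/√(h(x))` is not integrable on `(ρ₀, a)` for any `a > ρ₀`. -/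
theorem stmt_15 (n : ℕ) (hn : 1 ≤ n) (D : ℝ) (hD : 0 < D)
    (c : ℝ) (hc : c = -(((n : ℝ) + 1) * ((n : ℝ) * D) ^ ((1 : ℝ) / ((n : ℝ) + 1))))
    (ρ₀ : ℝ) (hρ₀ : ρ₀ = ((n : ℝ) * D) ^ ((1 : ℝ) / (2 * (n : ℝ) + 2)))
    (h : ℝ → ℝ) (hh : ∀ x : ℝ, h x = x ^ 2 + D * x ^ (-(2 * n : ℤ)) + c / (n : ℝ)) :
    ∀ a : ℝ, ρ₀ < a →
      ¬ MeasureTheory.IntegrableOn (fun x => 1 / Real.sqrt (h x)) (Set.Ioo ρ₀ a) := by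
  intro a hρ₀a
  have hn0 : n ≠ 0 := by omega
  have hn' : (n : ℝ) ≠ 0 := Nat.cast_ne_zero.mpr hn0
  have hnD : 0 ≤ (n : ℝ) * D := by positivity
  have hρ₀pos : 0 < ρ₀ := hρ₀ ▸ Real.rpow_pos_of_pos (by positivity) _
  have hρ₀_pow : ∀ k : ℕ, ρ₀ ^ k = ((n : ℝ) * D) ^ ((k : ℝ) / (2 * n + 2)) := fun k => by
    rw [hρ₀, ← Real.rpow_natCast, ← Real.rpow_mul hnD, one_div_mul_eq_div]
  have hD_eq : D = ρ₀ ^ (2 * n + 2) / n := by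
    rw [hρ₀_pow, Nat.cast_add, Nat.cast_mul, Nat.cast_ofNat, div_self (by positivity),
      Real.rpow_one]
    field_simp
  have hc_eq : c / n = -((n + 1) / n * ρ₀ ^ 2) := by
    rw [hc, hρ₀_pow, show ((2 : ℕ) : ℝ) / (2 * n + 2) = 1 / (n + 1) by field_simp; ring]
    ring
  have h_eq : h = potential n ρ₀ := funext fun x => by
    rw [hh, potential, hD_eq, hc_eq, sub_eq_add_neg]
  rw [h_eq]
  exact not_integrableOn_one_div_sqrt_of_le_mul_sq hρ₀a (by positivity)
    fun x hx => potential_pos_and_le_mul_sq hn0 hρ₀pos hx.1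
end

section
/- Let n ≥ 1 be an integer, D > 0, set c := −(n+1)·(n·D)^{1/(n+1)} and ρ₀ := (n·D)^{1/(2n+2)}, and let a > ρ₀ be given. Then there exists a differentiable function ρ : ℝ → ℝ with ρ(0) = a such that for every t ∈ ℝ one has ρ(t) > ρ₀ and ρ'(t) = √(ρ(t)² + D·ρ(t)^{−2n} + c/n); in particular ρ'(t) > 0 for all t ∈ ℝ. -/
/-!
Write `s = ρ₀²` and `u = x²`. The choice of `c` and `ρ₀` (equivalently `n D = s^(n+1)`) gives
`n x^(2n) (x² + D x^(-2n) + c/n) = n u^(n+1) - (n+1) s u^n + s^(n+1) = (u - s)² K(u)` with `K > 0`,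
so the right-hand side `V` of the equation is positive on `(ρ₀, ∞)` and has a double zero at `ρ₀`.
The solution is the inverse of `G x = ∫ u in a..x, V(u)^(-1/2)`. It is defined on all of `ℝ` because
`√V ≤ M (x - ρ₀)` near `ρ₀` and `√V ≤ L x` near `∞`, so `G` diverges logarithmically at both ends.
-/

open Real Set Filter Topology intervalIntegral

theorem exists_hasDerivAt_inverse_of_surjOn {G g : ℝ → ℝ} {s : Set ℝ} (hs : IsOpen s)
    [s.OrdConnected] (hG : ∀ x ∈ s, HasDerivAt G (g x) x) (hg : ∀ x ∈ s, 0 < g x)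
    (hsurj : SurjOn G s univ) :
    ∃ ρ : ℝ → ℝ, (∀ t, ρ t ∈ s ∧ G (ρ t) = t) ∧ (∀ x ∈ s, ρ (G x) = x) ∧
      ∀ t, HasDerivAt ρ (g (ρ t))⁻¹ t := by
  have hmono : StrictMonoOn G s :=
    strictMonoOn_of_hasDerivWithinAt_pos (OrdConnected.convex ‹_›)
      (fun x hx => (hG x hx).continuousAt.continuousWithinAt)
      (fun x hx => (hG x (interior_subset hx)).hasDerivWithinAt)
      (fun x hx => hg x (interior_subset hx))
  choose ρ hρs hGρ using fun t => hsurj (mem_univ t)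
  have hρG : ∀ x ∈ s, ρ (G x) = x := fun x hx => hmono.injOn (hρs _) hx (hGρ _)
  have hρmono : StrictMono ρ := fun t₁ t₂ h =>
    (hmono.lt_iff_lt (hρs t₁) (hρs t₂)).1 (by rwa [hGρ, hGρ])
  refine ⟨ρ, fun t => ⟨hρs t, hGρ t⟩, hρG, fun t => ?_⟩
  have hrange : ρ '' univ ∈ 𝓝 (ρ t) :=
    mem_of_superset (hs.mem_nhds (hρs t)) fun x hx => ⟨G x, mem_univ _, hρG x hx⟩
  exact (hG _ (hρs t)).of_local_left_inverse
    ((hρmono.strictMonoOn univ).continuousAt_of_image_mem_nhds univ_mem hrange)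
    (hg _ (hρs t)).ne' (Eventually.of_forall hGρ)

theorem exists_forall_hasDerivAt_of_tendsto_integral_inv {f : ℝ → ℝ} {α a : ℝ} (ha : α < a)
    (hf : ContinuousOn f (Ioi α)) (hpos : ∀ x ∈ Ioi α, 0 < f x)
    (htop : Tendsto (fun x => ∫ u in a..x, (f u)⁻¹) atTop atTop)
    (hbot : Tendsto (fun x => ∫ u in a..x, (f u)⁻¹) (𝓝[>] α) atBot) :
    ∃ ρ : ℝ → ℝ, ρ 0 = a ∧ ∀ t, α < ρ t ∧ HasDerivAt ρ (f (ρ t)) t := by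
  have hinv : ContinuousOn (fun u => (f u)⁻¹) (Ioi α) := hf.inv₀ fun x hx => (hpos x hx).ne'
  have hG : ∀ x ∈ Ioi α, HasDerivAt (fun x => ∫ u in a..x, (f u)⁻¹) (f x)⁻¹ x := fun x hx =>
    integral_hasDerivAt_right (hinv.mono (ordConnected_Ioi.uIcc_subset ha hx)).intervalIntegrable
      (hinv.stronglyMeasurableAtFilter isOpen_Ioi x hx) (hinv.continuousAt (isOpen_Ioi.mem_nhds hx))
  have hsurj : SurjOn (fun x => ∫ u in a..x, (f u)⁻¹) (Ioi α) univ :=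
    ContinuousOn.surjOn_of_tendsto nonempty_Ioi
      (fun x hx => (hG x hx).continuousAt.continuousWithinAt)
      ((tendsto_comp_coe_Ioi_atBot ..).2 hbot) (tendsto_comp_val_Ioi_atTop.2 htop)
  obtain ⟨ρ, hρ, hρG, hρ'⟩ := exists_hasDerivAt_inverse_of_surjOn isOpen_Ioi hG
    (fun x hx => inv_pos.2 (hpos x hx)) hsurj
  refine ⟨ρ, ?_, fun t => ⟨(hρ t).1, by simpa using hρ' t⟩⟩
  simpa using hρG a ha

theorem le_integral_inv_of_le_mul_sub {f : ℝ → ℝ} {K β x y : ℝ} (hK : 0 < K) (hβx : β < x)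
    (hxy : x ≤ y) (hf : ContinuousOn f (Icc x y)) (hpos : ∀ u ∈ Icc x y, 0 < f u)
    (hle : ∀ u ∈ Icc x y, f u ≤ K * (u - β)) :
    K⁻¹ * log ((y - β) / (x - β)) ≤ ∫ u in x..y, (f u)⁻¹ := by
  have hlin : ∀ u ∈ Icc x y, 0 < K * (u - β) := fun u hu => mul_pos hK (by linarith [hu.1])
  calc K⁻¹ * log ((y - β) / (x - β)) = ∫ u in x..y, (K * (u - β))⁻¹ := by
        simp only [mul_inv, integral_const_mul, integral_comp_sub_right (fun u => u⁻¹)]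
        rw [integral_inv_of_pos (by linarith) (by linarith)]
    _ ≤ ∫ u in x..y, (f u)⁻¹ := by
        refine integral_mono_on hxy ?_ ?_ fun u hu => inv_anti₀ (hpos u hu) (hle u hu)
        · refine ContinuousOn.intervalIntegrable ?_
          rw [uIcc_of_le hxy]
          exact (continuousOn_const.mul (continuousOn_id.sub continuousOn_const)).inv₀
            fun u hu => (hlin u hu).ne'
        · refine ContinuousOn.intervalIntegrable ?_
          rw [uIcc_of_le hxy]
          exact hf.inv₀ fun u hu => (hpos u hu).ne'

theorem tendsto_integral_inv_atTop_of_le_mul_sub {f : ℝ → ℝ} {K β a : ℝ} (hK : 0 < K)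
    (hβa : β < a) (hf : ContinuousOn f (Ici a)) (hpos : ∀ u ∈ Ici a, 0 < f u)
    (hle : ∀ u ∈ Ici a, f u ≤ K * (u - β)) :
    Tendsto (fun y => ∫ u in a..y, (f u)⁻¹) atTop atTop := by
  refine tendsto_atTop_mono' atTop ((eventually_ge_atTop a).mono fun y hy =>
    le_integral_inv_of_le_mul_sub hK hβa hy (hf.mono Icc_subset_Ici_self)
      (fun u hu => hpos u hu.1) (fun u hu => hle u hu.1)) ?_
  refine (tendsto_log_atTop.comp ?_).const_mul_atTop (inv_pos.2 hK)
  exact (tendsto_atTop_add_const_right _ (-β) tendsto_id).atTop_div_const (sub_pos.2 hβa)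

theorem tendsto_integral_inv_nhdsGT_of_le_mul_sub {f : ℝ → ℝ} {K α a : ℝ} (hK : 0 < K)
    (hαa : α < a) (hf : ContinuousOn f (Ioc α a)) (hpos : ∀ u ∈ Ioc α a, 0 < f u)
    (hle : ∀ u ∈ Ioc α a, f u ≤ K * (u - α)) :
    Tendsto (fun x => ∫ u in a..x, (f u)⁻¹) (𝓝[>] α) atBot := by
  have hbound : ∀ x ∈ Ioo α a, ∫ u in a..x, (f u)⁻¹ ≤ -(K⁻¹ * log ((a - α) / (x - α))) :=
    fun x hx => by
      have hIcc : Icc x a ⊆ Ioc α a := Icc_subset_Ioc_iff hx.2.le |>.2 ⟨hx.1, le_rfl⟩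
      rw [integral_symm, neg_le_neg_iff]
      exact le_integral_inv_of_le_mul_sub hK hx.1 hx.2.le (hf.mono hIcc)
        (fun u hu => hpos u (hIcc hu)) (fun u hu => hle u (hIcc hu))
  refine tendsto_atBot_mono' _ (eventually_of_mem (Ioo_mem_nhdsGT hαa) hbound) ?_
  refine tendsto_neg_atTop_atBot.comp ((tendsto_log_atTop.comp ?_).const_mul_atTop (inv_pos.2 hK))
  have hsub : Tendsto (fun x => x - α) (𝓝[>] α) (𝓝[>] 0) :=
    tendsto_nhdsWithin_iff.2
      ⟨by simpa using ((continuous_sub_right α).tendsto α).mono_left nhdsWithin_le_nhds,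
        eventually_nhdsWithin_of_forall fun _ hx => mem_Ioi.2 (sub_pos.2 hx)⟩
  simpa only [div_eq_mul_inv, Pi.inv_apply] using
    hsub.inv_tendsto_nhdsGT_zero.const_mul_atTop (sub_pos.2 hαa)

noncomputable def doubleRootCofactor (n : ℕ) (s u : ℝ) : ℝ :=
  ∑ k ∈ Finset.range n, (k + 1) * u ^ k * s ^ (n - 1 - k)

theorem doubleRootCofactor_succ (n : ℕ) (s u : ℝ) :
    doubleRootCofactor (n + 1) s u = s * doubleRootCofactor n s u + (n + 1) * u ^ n := by
  rw [doubleRootCofactor, Finset.sum_range_succ, doubleRootCofactor, Finset.mul_sum]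
  congr 1
  · refine Finset.sum_congr rfl fun k hk => ?_
    rw [show n + 1 - 1 - k = n - 1 - k + 1 by have := Finset.mem_range.1 hk; omega, pow_succ]
    ring
  · simp

theorem sub_sq_mul_doubleRootCofactor (n : ℕ) (s u : ℝ) :
    (u - s) ^ 2 * doubleRootCofactor n s u
      = n * u ^ (n + 1) - (n + 1) * s * u ^ n + s ^ (n + 1) := by
  induction n with
  | zero => simp [doubleRootCofactor]
  | succ n ih =>
    rw [doubleRootCofactor_succ]
    push_cast
    linear_combination s * ih

theorem doubleRootCofactor_pos {n : ℕ} {s u : ℝ} (hn : n ≠ 0) (hs : 0 < s) (hu : 0 < u) :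
    0 < doubleRootCofactor n s u :=
  Finset.sum_pos (fun _ _ => by positivity) (Finset.nonempty_range_iff.2 hn)

theorem doubleRootCofactor_mono {n : ℕ} {s u v : ℝ} (hs : 0 ≤ s) (hu : 0 ≤ u) (huv : u ≤ v) :
    doubleRootCofactor n s u ≤ doubleRootCofactor n s v :=
  Finset.sum_le_sum fun _ _ => by gcongr

theorem zpow_neg_two_mul_natCast (x : ℝ) (n : ℕ) : x ^ (-(2 * n : ℤ)) = ((x ^ 2) ^ n)⁻¹ := by
  rw [zpow_neg, ← pow_mul, ← zpow_natCast]
  push_cast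
  rfl

theorem sqrt_le_sqrt_mul_of_le_mul_sq {v M d : ℝ} (hM : 0 ≤ M) (hd : 0 ≤ d)
    (h : v ≤ M * d ^ 2) : √v ≤ √M * d :=
  (sqrt_le_left (by positivity)).2 (by rwa [mul_pow, sq_sqrt hM])

/-- `x² + D x^(-2n) + c/n` with `c = -(n+1) ρ₀²`. -/
noncomputable def warpingPotential (n : ℕ) (D ρ₀ x : ℝ) : ℝ :=
  x ^ 2 + D * x ^ (-(2 * n : ℤ)) - (n + 1) * ρ₀ ^ 2 / n

section warpingPotential

variable {n : ℕ} {D ρ₀ x a : ℝ}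

theorem warpingPotential_eq (hn : n ≠ 0) (hD : n * D = ρ₀ ^ (2 * n + 2)) (hx : x ≠ 0) :
    warpingPotential n D ρ₀ x
      = (x ^ 2 - ρ₀ ^ 2) ^ 2 * doubleRootCofactor n (ρ₀ ^ 2) (x ^ 2) / (n * (x ^ 2) ^ n) := by
  rw [warpingPotential, zpow_neg_two_mul_natCast, eq_div_iff (by positivity),
    sub_sq_mul_doubleRootCofactor]
  field_simp
  linear_combination hD

theorem continuousOn_warpingPotential : ContinuousOn (warpingPotential n D ρ₀) {0}ᶜ :=
  ((continuousOn_pow 2).add (continuousOn_const.mul (continuousOn_zpow₀ _))).sub continuousOn_const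

theorem warpingPotential_pos (hn : n ≠ 0) (hD : n * D = ρ₀ ^ (2 * n + 2)) (hρ₀ : 0 < ρ₀)
    (hx : ρ₀ < x) : 0 < warpingPotential n D ρ₀ x := by
  have hx0 : 0 < x := hρ₀.trans hx
  have hsq : 0 < (x ^ 2 - ρ₀ ^ 2) ^ 2 :=
    pow_pos (sub_pos.2 (pow_lt_pow_left₀ hx hρ₀.le two_ne_zero)) 2
  have := doubleRootCofactor_pos hn (pow_pos hρ₀ 2) (pow_pos hx0 2)
  rw [warpingPotential_eq hn hD hx0.ne']
  positivity

theorem warpingPotential_le_mul_sq (hD : 0 ≤ D) (ha : 0 < a) (hx : a ≤ x) :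
    warpingPotential n D ρ₀ x ≤ (1 + D / (a ^ 2) ^ (n + 1)) * x ^ 2 := by
  have hax : a ^ 2 ≤ x ^ 2 := pow_le_pow_left₀ ha.le hx 2
  have hdecay : D * ((x ^ 2) ^ n)⁻¹ ≤ D / (a ^ 2) ^ (n + 1) * x ^ 2 :=
    calc D * ((x ^ 2) ^ n)⁻¹ ≤ D * ((a ^ 2) ^ n)⁻¹ := by gcongr
      _ = D / (a ^ 2) ^ (n + 1) * a ^ 2 := by field_simp; ring
      _ ≤ D / (a ^ 2) ^ (n + 1) * x ^ 2 := by gcongr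
  have : 0 ≤ (n + 1) * ρ₀ ^ 2 / n := by positivity
  rw [warpingPotential, zpow_neg_two_mul_natCast]
  linarith

theorem warpingPotential_le_mul_sub_sq (hn : n ≠ 0) (hD : n * D = ρ₀ ^ (2 * n + 2))
    (hρ₀ : 0 < ρ₀) (hx : ρ₀ < x) (hxa : x ≤ a) :
    warpingPotential n D ρ₀ x ≤
      (2 * a) ^ 2 * doubleRootCofactor n (ρ₀ ^ 2) (a ^ 2) / (n * (ρ₀ ^ 2) ^ n) * (x - ρ₀) ^ 2 := by
  have hx0 : 0 < x := hρ₀.trans hx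
  calc warpingPotential n D ρ₀ x
      = (x + ρ₀) ^ 2 * doubleRootCofactor n (ρ₀ ^ 2) (x ^ 2) / (n * (x ^ 2) ^ n)
          * (x - ρ₀) ^ 2 := by
        rw [warpingPotential_eq hn hD hx0.ne']; ring
    _ ≤ _ := by
        have hK := doubleRootCofactor_mono (n := n) (pow_pos hρ₀ 2).le (pow_pos hx0 2).le
          (pow_le_pow_left₀ hx0.le hxa 2)
        have hKx := doubleRootCofactor_pos hn (pow_pos hρ₀ 2) (pow_pos hx0 2)
        gcongr
        · exact mul_nonneg (by positivity) (hKx.trans_le hK).le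
        · linarith

theorem continuousOn_sqrt_warpingPotential (hρ₀ : 0 ≤ ρ₀) :
    ContinuousOn (fun x => √(warpingPotential n D ρ₀ x)) (Ioi ρ₀) :=
  continuous_sqrt.comp_continuousOn
    (continuousOn_warpingPotential.mono fun _ hx => (hρ₀.trans_lt hx).ne')

theorem tendsto_integral_inv_sqrt_warpingPotential_atTop (hn : n ≠ 0) (hD0 : 0 ≤ D)
    (hD : n * D = ρ₀ ^ (2 * n + 2)) (hρ₀ : 0 < ρ₀) (ha : ρ₀ < a) :
    Tendsto (fun x => ∫ u in a..x, (√(warpingPotential n D ρ₀ u))⁻¹) atTop atTop := by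
  have ha0 : 0 < a := hρ₀.trans ha
  refine tendsto_integral_inv_atTop_of_le_mul_sub (K := √(1 + D / (a ^ 2) ^ (n + 1))) (β := 0)
    (sqrt_pos.2 (by positivity)) ha0 ((continuousOn_sqrt_warpingPotential hρ₀.le).mono
      (Ici_subset_Ioi.2 ha)) (fun u hu => sqrt_pos.2 (warpingPotential_pos hn hD hρ₀
      (ha.trans_le hu))) fun u hu => ?_
  exact sqrt_le_sqrt_mul_of_le_mul_sq (by positivity) (by simpa using ha0.le.trans hu)
    (by simpa using warpingPotential_le_mul_sq hD0 ha0 hu)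

theorem tendsto_integral_inv_sqrt_warpingPotential_nhdsGT (hn : n ≠ 0)
    (hD : n * D = ρ₀ ^ (2 * n + 2)) (hρ₀ : 0 < ρ₀) (ha : ρ₀ < a) :
    Tendsto (fun x => ∫ u in a..x, (√(warpingPotential n D ρ₀ u))⁻¹) (𝓝[>] ρ₀) atBot := by
  have ha0 : 0 < a := hρ₀.trans ha
  have hK := doubleRootCofactor_pos hn (pow_pos hρ₀ 2) (pow_pos ha0 2)
  refine tendsto_integral_inv_nhdsGT_of_le_mul_sub
    (K := √((2 * a) ^ 2 * doubleRootCofactor n (ρ₀ ^ 2) (a ^ 2) / (n * (ρ₀ ^ 2) ^ n)))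
    (sqrt_pos.2 (by positivity)) ha ((continuousOn_sqrt_warpingPotential hρ₀.le).mono
      Ioc_subset_Ioi_self) (fun u hu => sqrt_pos.2 (warpingPotential_pos hn hD hρ₀ hu.1))
    fun u hu => ?_
  exact sqrt_le_sqrt_mul_of_le_mul_sq (by positivity) (sub_nonneg.2 hu.1.le)
    (warpingPotential_le_mul_sub_sq hn hD hρ₀ hu.1 hu.2)

end warpingPotential

/-- For `D > 0`, `c = -(n+1)(n D)^{1/(n+1)}` and `ρ₀ = (n D)^{1/(2n+2)}`, given
any `a > ρ₀`, the ODE `ρ' = √(ρ² + D ρ^{-2n} + c/n)` admits a solution defined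
on all of `ℝ` with `ρ(0) = a`, `ρ > ρ₀` and `ρ' > 0` everywhere. -/
theorem stmt_16 (n : ℕ) (hn : 1 ≤ n) (D : ℝ) (hD : 0 < D)
    (c : ℝ) (hc : c = -(((n : ℝ) + 1) * ((n : ℝ) * D) ^ ((1 : ℝ) / ((n : ℝ) + 1))))
    (ρ₀ : ℝ) (hρ₀ : ρ₀ = ((n : ℝ) * D) ^ ((1 : ℝ) / (2 * (n : ℝ) + 2)))
    (a : ℝ) (ha : ρ₀ < a) :
    ∃ ρ : ℝ → ℝ, ρ 0 = a ∧ ∀ t : ℝ, ρ₀ < ρ t ∧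
      HasDerivAt ρ (Real.sqrt ((ρ t) ^ 2 + D * (ρ t) ^ (-(2 * n : ℤ)) + c / (n : ℝ))) t ∧
      0 < Real.sqrt ((ρ t) ^ 2 + D * (ρ t) ^ (-(2 * n : ℤ)) + c / (n : ℝ)) := by
  have hn0 : n ≠ 0 := by omega
  have hnD : 0 < (n : ℝ) * D := by positivity
  have hρ₀pos : 0 < ρ₀ := hρ₀ ▸ rpow_pos_of_pos hnD _
  have hρ₀sq : ρ₀ ^ 2 = ((n : ℝ) * D) ^ ((1 : ℝ) / ((n : ℝ) + 1)) := by
    rw [hρ₀, ← rpow_natCast, ← rpow_mul hnD.le]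
    congr 1
    field_simp
    ring
  have hnDρ₀ : n * D = ρ₀ ^ (2 * n + 2) := by
    rw [show 2 * n + 2 = 2 * (n + 1) by ring, pow_mul, hρ₀sq, ← rpow_natCast, ← rpow_mul hnD.le,
      Nat.cast_add_one, one_div_mul_cancel (by positivity), rpow_one]
  have hV : ∀ x, x ^ 2 + D * x ^ (-(2 * n : ℤ)) + c / n = warpingPotential n D ρ₀ x :=
    fun x => by rw [warpingPotential, hc, ← hρ₀sq]; ring
  have hpos : ∀ x ∈ Ioi ρ₀, 0 < √(warpingPotential n D ρ₀ x) :=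
    fun x hx => sqrt_pos.2 (warpingPotential_pos hn0 hnDρ₀ hρ₀pos hx)
  obtain ⟨ρ, hρ0, hρ⟩ := exists_forall_hasDerivAt_of_tendsto_integral_inv ha
    (continuousOn_sqrt_warpingPotential hρ₀pos.le) hpos
    (tendsto_integral_inv_sqrt_warpingPotential_atTop hn0 hD.le hnDρ₀ hρ₀pos ha)
    (tendsto_integral_inv_sqrt_warpingPotential_nhdsGT hn0 hnDρ₀ hρ₀pos ha)
  simp only [hV]
  exact ⟨ρ, hρ0, fun t => ⟨(hρ t).1, (hρ t).2, hpos _ (hρ t).1⟩⟩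
end
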